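/- For n ≥ 4 and 2 ≤ j < i ≤ n−1, the map that deletes the final letter j from a permutation (and standardizes, i.e., decreases by 1 every letter greater than j) is a bijection from B_{n,i,j} onto B_{n−1,i−1} = ⋃_{k≠i−1} B_{n−1,k,i−1}; consequently b(n,i,j) = b(n−1,i−1) := Σ_{k≠i−1} b(n−1,k,i−1). -/

import Mathlib

open List

/-- `w` is a linear permutation of `[n] = {1,…,n}` written in one-line notation. -/
def IsPermOf (n : ℕ) (w : List ℕ) : Prop :=
  w.Perm ((List.range n).map (· + 1))

/-- occurrence of the vincular pattern 1̄2̄3 : positions a, a+1, c with c > a+1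
forming an increasing triple. -/
def Occ123 (w : List ℕ) : Prop :=
  ∃ a c, a + 1 < c ∧ c < w.length ∧
    w.getD a 0 < w.getD (a + 1) 0 ∧ w.getD (a + 1) 0 < w.getD c 0

/-- occurrence of the vincular pattern 41\overline{23} : positions a < b < c (and c+1)
with w_b < w_c < w_{c+1} < w_a. -/
def Occ4123 (w : List ℕ) : Prop :=
  ∃ a b c, a < b ∧ b < c ∧ c + 1 < w.length ∧
    w.getD b 0 < w.getD c 0 ∧ w.getD c 0 < w.getD (c + 1) 0 ∧
    w.getD (c + 1) 0 < w.getD a 0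

/-- occurrence of the vincular pattern 1\overline{23} : positions a < b (and b+1)
forming an increasing triple. -/
def Occ1_23 (w : List ℕ) : Prop :=
  ∃ a b, a < b ∧ b + 1 < w.length ∧
    w.getD a 0 < w.getD b 0 ∧ w.getD b 0 < w.getD (b + 1) 0

/-- occurrence of the vincular pattern \overline{23}41 : positions a, a+1, c, d with
a+1 < c < d and w_d < w_a < w_{a+1} < w_c. -/
def Occ2341 (w : List ℕ) : Prop :=
  ∃ a c d, a + 1 < c ∧ c < d ∧ d < w.length ∧
    w.getD d 0 < w.getD a 0 ∧ w.getD a 0 < w.getD (a + 1) 0 ∧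
    w.getD (a + 1) 0 < w.getD c 0

/-- a circular permutation (represented by any linear reading `w`) avoids
\overline{23}41 iff no cyclic rotation of `w` contains it. -/
def CircAvoids2341 (w : List ℕ) : Prop := ∀ k, ¬ Occ2341 (w.rotate k)

/-- the set `L_n` of linear permutations of `[n]` avoiding both 1̄2̄3 and 41\overline{23}. -/
def Lset (n : ℕ) : Set (List ℕ) :=
  {w | IsPermOf n w ∧ ¬ Occ123 w ∧ ¬ Occ4123 w}

/-- the permutation (n−1)(n−2)⋯1 n. -/
def excludedPerm (n : ℕ) : List ℕ :=
  ((List.range (n - 1)).map (· + 1)).reverse ++ [n]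

/-- `L_n^* = L_n \ {(n−1)(n−2)⋯1n}`. -/
def Lstar (n : ℕ) : Set (List ℕ) := Lset n \ {excludedPerm n}

/-- `B_n`: members of `L_n^*` in which 1 occurs to the right of n. -/
def Bset (n : ℕ) : Set (List ℕ) :=
  {w ∈ Lstar n | w.idxOf n < w.idxOf 1}

/-- `C_n`: members of `L_n^*` in which 1 occurs to the left of n and 2 to its right. -/
def Cset (n : ℕ) : Set (List ℕ) :=
  {w ∈ Lstar n | w.idxOf 1 < w.idxOf n ∧ w.idxOf n < w.idxOf 2}

/-- members of `B_n` ending in the two letters i, j. -/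
def Bnij (n i j : ℕ) : Set (List ℕ) :=
  {w ∈ Bset n | ∃ u, w = u ++ [i, j]}

/-- members of `C_n` ending in the two letters i, j. -/
def Cnij (n i j : ℕ) : Set (List ℕ) :=
  {w ∈ Cset n | ∃ u, w = u ++ [i, j]}

noncomputable def bcount (n i j : ℕ) : ℕ := (Bnij n i j).ncard
noncomputable def ccount (n i j : ℕ) : ℕ := (Cnij n i j).ncard

/-- `b(n,j)`: the number of members of `B_n` ending in the letter j. -/
noncomputable def bLast (n j : ℕ) : ℕ := Set.ncard {w ∈ Bset n | ∃ u, w = u ++ [j]}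

/-- `c(n,j)`: the number of members of `C_n` ending in the letter j. -/
noncomputable def cLast (n j : ℕ) : ℕ := Set.ncard {w ∈ Cset n | ∃ u, w = u ++ [j]}

/-- `V_n`: linear permutations of `[n]` avoiding both 1̄2̄3 and 1\overline{23}. -/
def Vset (n : ℕ) : Set (List ℕ) :=
  {w | IsPermOf n w ∧ ¬ Occ123 w ∧ ¬ Occ1_23 w}

/-- `v(n,j)`: the number of members of `V_n` ending in the letter j. -/
noncomputable def vcount (n j : ℕ) : ℕ := Set.ncard {w ∈ Vset n | ∃ u, w = u ++ [j]}

/-- deletion of the final letter followed by standardization at level `j`. -/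
def delStd (j : ℕ) (w : List ℕ) : List ℕ :=
  w.dropLast.map (fun x => if j < x then x - 1 else x)


/-!
Write `w ∈ B_{n,i,j}` as `l ++ [j]`, where `l` ends in `i > j`. The final letter `j` takes part in
no occurrence of 1̄2̄3 or 41\overline{23} that `l` does not already contain: an ascent ending in `j`
also ascends to `i`, and `j` cannot top a rising pair whose bottom is `i`. So `w` avoids both
patterns iff `l` does, iff its standardization does, and the relative positions of `1` and `n` are
preserved because `2 ≤ j < n`. The inverse re-inserts `j` as last letter after raising every letter
`≥ j` by one. Sorting `B_{n-1,i-1}` by the penultimate letter gives the sum.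
-/

def shiftDown (j x : ℕ) : ℕ := if j < x then x - 1 else x

def shiftUp (j x : ℕ) : ℕ := if x < j then x else x + 1

theorem shiftUp_of_lt {j x : ℕ} (h : x < j) : shiftUp j x = x := if_pos h

theorem shiftUp_of_le {j x : ℕ} (h : j ≤ x) : shiftUp j x = x + 1 := if_neg (by omega)

theorem shiftUp_strictMono (j : ℕ) : StrictMono (shiftUp j) := by
  intro x y h; unfold shiftUp; split_ifs <;> omega

theorem shiftUp_ne (j x : ℕ) : shiftUp j x ≠ j := by
  unfold shiftUp; split_ifs <;> omega

theorem shiftDown_shiftUp (j x : ℕ) : shiftDown j (shiftUp j x) = x := by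
  unfold shiftDown shiftUp; split_ifs <;> omega

theorem shiftUp_shiftDown {j x : ℕ} (h : x ≠ j) : shiftUp j (shiftDown j x) = x := by
  unfold shiftDown shiftUp; split_ifs <;> omega

section Patterns

variable {l : List ℕ} {φ : ℕ → ℕ}

theorem getD_map_of_lt {p : ℕ} (hp : p < l.length) :
    (l.map φ).getD p 0 = φ (l.getD p 0) := by
  rw [getD_eq_getElem _ _ (by simpa using hp), getD_eq_getElem _ _ hp, getElem_map]

theorem getD_mem_of_lt {p : ℕ} (hp : p < l.length) : l.getD p 0 ∈ l := by
  rw [getD_eq_getElem _ _ hp]; exact getElem_mem hp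

theorem getD_map_lt_getD_map_iff (hφ : StrictMonoOn φ {x | x ∈ l}) {p q : ℕ}
    (hp : p < l.length) (hq : q < l.length) :
    (l.map φ).getD p 0 < (l.map φ).getD q 0 ↔ l.getD p 0 < l.getD q 0 := by
  rw [getD_map_of_lt hp, getD_map_of_lt hq]
  exact hφ.lt_iff_lt (getD_mem_of_lt hp) (getD_mem_of_lt hq)

theorem occ123_map_iff (hφ : StrictMonoOn φ {x | x ∈ l}) : Occ123 (l.map φ) ↔ Occ123 l := by
  simp only [Occ123, length_map]
  refine exists₂_congr fun a c => and_congr_right fun hac => and_congr_right fun hc => ?_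
  rw [getD_map_lt_getD_map_iff hφ (by omega) (by omega),
    getD_map_lt_getD_map_iff hφ (by omega) hc]

theorem occ4123_map_iff (hφ : StrictMonoOn φ {x | x ∈ l}) : Occ4123 (l.map φ) ↔ Occ4123 l := by
  simp only [Occ4123, length_map]
  refine exists₃_congr fun a b c => and_congr_right fun hab => and_congr_right fun hbc =>
    and_congr_right fun hc => ?_
  rw [getD_map_lt_getD_map_iff hφ (by omega) (by omega),
    getD_map_lt_getD_map_iff hφ (by omega) (by omega),
    getD_map_lt_getD_map_iff hφ (by omega) (by omega)]

theorem Occ123.append (h : Occ123 l) (t : List ℕ) : Occ123 (l ++ t) := by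
  obtain ⟨a, c, hac, hc, h₁, h₂⟩ := h
  refine ⟨a, c, hac, by rw [length_append]; omega, ?_⟩
  rw [getD_append _ _ _ _ (by omega), getD_append _ _ _ _ (by omega), getD_append _ _ _ _ hc]
  exact ⟨h₁, h₂⟩

theorem Occ4123.append (h : Occ4123 l) (t : List ℕ) : Occ4123 (l ++ t) := by
  obtain ⟨a, b, c, hab, hbc, hc, h₁, h₂, h₃⟩ := h
  refine ⟨a, b, c, hab, hbc, by rw [length_append]; omega, ?_⟩
  rw [getD_append _ _ _ _ (by omega), getD_append _ _ _ _ (by omega),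
    getD_append _ _ _ _ (by omega), getD_append _ _ _ _ (by omega)]
  exact ⟨h₁, h₂, h₃⟩

end Patterns

section AppendDescent

variable {u : List ℕ} {x y : ℕ}

theorem getD_append_singleton_of_lt {p : ℕ} (hp : p < u.length + 1) :
    (u ++ [x] ++ [y]).getD p 0 = (u ++ [x]).getD p 0 :=
  getD_append _ _ _ _ (by simpa using hp)

theorem occ123_append_singleton_iff (hyx : y < x) :
    Occ123 (u ++ [x] ++ [y]) ↔ Occ123 (u ++ [x]) := by
  refine ⟨fun ⟨a, c, hac, hc, h₁, h₂⟩ => ?_, fun h => h.append [y]⟩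
  simp only [length_append, length_singleton] at hc
  rw [getD_append_singleton_of_lt (by omega), getD_append_singleton_of_lt (by omega)] at h₁
  rw [getD_append_singleton_of_lt (by omega)] at h₂
  rcases Nat.lt_or_ge c (u.length + 1) with hc' | hc'
  · rw [getD_append_singleton_of_lt hc'] at h₂
    exact ⟨a, c, hac, by simpa using hc', h₁, h₂⟩
  · -- the ascent ends at the final letter `y`, hence also rises to the letter `x > y` before it
    have hx : (u ++ [x]).getD u.length 0 = x := by simp [getD_eq_getElem?_getD]
    have hy : (u ++ [x] ++ [y]).getD c 0 = y := by
      simp [show c = u.length + 1 by omega, getD_eq_getElem?_getD]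
    rw [hy] at h₂
    rcases Nat.lt_or_ge (a + 1) u.length with ha | ha
    · exact ⟨a, u.length, ha, by simp, h₁, hx.symm ▸ h₂.trans hyx⟩
    · rw [show a + 1 = u.length by omega, hx] at h₂
      omega

theorem occ4123_append_singleton_iff (hyx : y < x) :
    Occ4123 (u ++ [x] ++ [y]) ↔ Occ4123 (u ++ [x]) := by
  refine ⟨fun ⟨a, b, c, hab, hbc, hc, h₁, h₂, h₃⟩ => ?_, fun h => h.append [y]⟩
  simp only [length_append, length_singleton] at hc
  rcases Nat.lt_or_ge (c + 1) (u.length + 1) with hc' | hc'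
  · rw [getD_append_singleton_of_lt (by omega), getD_append_singleton_of_lt (by omega)] at h₁
    rw [getD_append_singleton_of_lt (by omega), getD_append_singleton_of_lt hc'] at h₂
    rw [getD_append_singleton_of_lt hc', getD_append_singleton_of_lt (by omega)] at h₃
    exact ⟨a, b, c, hab, hbc, by simpa using hc', h₁, h₂, h₃⟩
  · have hx : (u ++ [x] ++ [y]).getD c 0 = x := by
      simp [show c = u.length by omega, getD_eq_getElem?_getD]
    have hy : (u ++ [x] ++ [y]).getD (c + 1) 0 = y := by
      simp [show c = u.length by omega, getD_eq_getElem?_getD]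
    rw [hx, hy] at h₂
    omega

end AppendDescent

section Permutations

variable {m : ℕ} {w : List ℕ}

theorem mem_map_range_add_one {x : ℕ} : x ∈ (range m).map (· + 1) ↔ 1 ≤ x ∧ x ≤ m := by
  simp only [mem_map, mem_range]
  constructor
  · rintro ⟨y, hy, rfl⟩
    omega
  · intro hx
    exact ⟨x - 1, by omega, by omega⟩

theorem nodup_map_range_add_one (m : ℕ) : ((range m).map (· + 1)).Nodup :=
  nodup_range.map fun _ _ => Nat.succ.inj

theorem IsPermOf.mem_iff (h : IsPermOf m w) {x : ℕ} : x ∈ w ↔ 1 ≤ x ∧ x ≤ m :=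
  (Perm.mem_iff h).trans mem_map_range_add_one

theorem IsPermOf.nodup (h : IsPermOf m w) : w.Nodup :=
  h.nodup_iff.2 (nodup_map_range_add_one m)

theorem IsPermOf.length_eq (h : IsPermOf m w) : w.length = m := by
  simp [Perm.length_eq h]

theorem finite_setOf_isPermOf (m : ℕ) : {w : List ℕ | IsPermOf m w}.Finite :=
  (((range m).map (· + 1)).permutations.toFinset.finite_toSet).subset fun w hw => by
    simpa [mem_permutations, IsPermOf] using hw

theorem map_shiftUp_append_perm {n j : ℕ} (hj : 1 ≤ j) (hjn : j ≤ n) :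
    ((range (n - 1)).map (· + 1)).map (shiftUp j) ++ [j] ~ (range n).map (· + 1) := by
  have hnodup : (((range (n - 1)).map (· + 1)).map (shiftUp j) ++ [j]).Nodup := by
    refine nodup_append.2 ⟨(nodup_map_range_add_one _).map (shiftUp_strictMono j).injective,
      nodup_singleton j, ?_⟩
    simp [shiftUp_ne]
  refine (perm_ext_iff_of_nodup hnodup (nodup_map_range_add_one n)).2 fun x => ?_
  rw [mem_append, mem_map_range_add_one, mem_map]
  simp_rw [mem_map_range_add_one, mem_singleton]
  constructor
  · rintro (⟨y, hy, rfl⟩ | rfl)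
    · unfold shiftUp; split_ifs <;> omega
    · omega
  · intro hx
    rcases lt_trichotomy x j with h | rfl | h
    · exact .inl ⟨x, by omega, shiftUp_of_lt h⟩
    · exact .inr rfl
    · exact .inl ⟨x - 1, by omega, by rw [shiftUp_of_le (by omega)]; omega⟩

end Permutations

theorem idxOf_map_of_injective {φ : ℕ → ℕ} (hφ : Function.Injective φ) (l : List ℕ) (x : ℕ) :
    (l.map φ).idxOf (φ x) = l.idxOf x := by
  induction l with
  | nil => rfl
  | cons a t ih =>
    by_cases hax : a = x
    · simp [hax]
    · rw [map_cons, idxOf_cons_ne _ (hφ.ne hax), idxOf_cons_ne _ hax, ih]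

theorem ne_excludedPerm_of_eq_append {n x : ℕ} {w u : List ℕ} (hw : w = u ++ [x]) (hx : x ≠ n) :
    w ≠ excludedPerm n := by
  rintro rfl
  exact hx (by simpa [excludedPerm] using congrArg getLast? hw.symm)

theorem delStd_eq_map_shiftDown (j : ℕ) (w : List ℕ) : delStd j w = w.dropLast.map (shiftDown j) :=
  rfl

def appendLetter (j : ℕ) (v : List ℕ) : List ℕ := v.map (shiftUp j) ++ [j]

section AppendLetter

variable {i j n : ℕ} {v : List ℕ}

theorem delStd_appendLetter (j : ℕ) (v : List ℕ) : delStd j (appendLetter j v) = v := by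
  rw [delStd_eq_map_shiftDown, appendLetter, dropLast_concat, map_map]
  exact (map_congr_left fun x _ => shiftDown_shiftUp j x).trans (map_id v)

theorem appendLetter_delStd {l : List ℕ} (hl : j ∉ l) :
    appendLetter j (delStd j (l ++ [j])) = l ++ [j] := by
  rw [delStd_eq_map_shiftDown, appendLetter, dropLast_concat, map_map]
  congr 1
  exact (map_congr_left fun x hx => shiftUp_shiftDown (ne_of_mem_of_not_mem hx hl)).trans
    (map_id l)

theorem isPermOf_appendLetter_iff (hj : 1 ≤ j) (hjn : j ≤ n) :
    IsPermOf n (appendLetter j v) ↔ IsPermOf (n - 1) v := by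
  have hperm := map_shiftUp_append_perm hj hjn
  refine (⟨fun h => h.trans hperm.symm, fun h => h.trans hperm⟩ : _ ↔ _ ~ _).trans ?_
  rw [appendLetter, perm_append_right_iff, map_perm_map_iff (shiftUp_strictMono j).injective,
    IsPermOf]

theorem exists_appendLetter_eq_iff (hji : j < i) :
    (∃ u, appendLetter j v = u ++ [i, j]) ↔ ∃ u, v = u ++ [i - 1] := by
  have hcancel (u : List ℕ) : appendLetter j v = u ++ [i, j] ↔ v.map (shiftUp j) = u ++ [i] := by
    rw [appendLetter, show u ++ [i, j] = u ++ [i] ++ [j] by simp, append_cancel_right_eq]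
  have hi : shiftUp j (i - 1) = i := by rw [shiftUp_of_le (by omega)]; omega
  simp only [hcancel, ← getLast?_eq_some_iff, getLast?_map]
  rw [show some i = (some (i - 1)).map (shiftUp j) by simp [hi]]
  exact (Option.map_injective (shiftUp_strictMono j).injective).eq_iff

theorem idxOf_appendLetter {x y : ℕ} (hx : x ∈ v) (hxy : shiftUp j x = y) :
    (appendLetter j v).idxOf y = v.idxOf x := by
  rw [← hxy, appendLetter, idxOf_append_of_mem (mem_map_of_mem hx),
    idxOf_map_of_injective (shiftUp_strictMono j).injective]

theorem appendLetter_mem_Bnij_iff (hj : 2 ≤ j) (hji : j < i) (hin : i < n) :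
    appendLetter j v ∈ Bnij n i j ↔ v ∈ {w ∈ Bset (n - 1) | ∃ u, w = u ++ [i - 1]} := by
  by_cases hend : ∃ u, v = u ++ [i - 1]
  swap
  · simp [Bnij, exists_appendLetter_eq_iff hji, hend]
  have ⟨u, hu⟩ := hend
  have hmap : v.map (shiftUp j) = u.map (shiftUp j) ++ [i] := by
    simp [hu, shiftUp_of_le (show j ≤ i - 1 by omega), show i - 1 + 1 = i by omega]
  have hmono : StrictMonoOn (shiftUp j) {x | x ∈ v} := (shiftUp_strictMono j).strictMonoOn _
  have h123 : Occ123 (appendLetter j v) ↔ Occ123 v := by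
    rw [appendLetter, hmap, occ123_append_singleton_iff hji, ← hmap, occ123_map_iff hmono]
  have h4123 : Occ4123 (appendLetter j v) ↔ Occ4123 v := by
    rw [appendLetter, hmap, occ4123_append_singleton_iff hji, ← hmap, occ4123_map_iff hmono]
  have hidx (hv : IsPermOf (n - 1) v) :
      (appendLetter j v).idxOf n < (appendLetter j v).idxOf 1 ↔ v.idxOf (n - 1) < v.idxOf 1 := by
    rw [idxOf_appendLetter (hv.mem_iff.2 ⟨by omega, le_rfl⟩)
        (by rw [shiftUp_of_le (by omega)]; omega),
      idxOf_appendLetter (hv.mem_iff.2 ⟨le_rfl, by omega⟩) (shiftUp_of_lt (by omega))]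
  have hw_ne : appendLetter j v ≠ excludedPerm n := ne_excludedPerm_of_eq_append rfl (by omega)
  have hv_ne : v ≠ excludedPerm (n - 1) := ne_excludedPerm_of_eq_append hu (by omega)
  simp only [Bnij, Bset, Lstar, Lset, Set.mem_ofPred_eq, Set.mem_sdiff, Set.mem_singleton_iff,
    isPermOf_appendLetter_iff (show 1 ≤ j by omega) (show j ≤ n by omega), h123, h4123, hw_ne,
    hv_ne, exists_appendLetter_eq_iff hji, hend, not_false_eq_true, and_true]
  exact and_congr_right fun h => hidx h.1

end AppendLetter

theorem bijOn_delStd_Bnij {i j n : ℕ} (hj : 2 ≤ j) (hji : j < i) (hin : i < n) :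
    Set.BijOn (delStd j) (Bnij n i j) {w ∈ Bset (n - 1) | ∃ u, w = u ++ [i - 1]} := by
  have hleft : Set.LeftInvOn (appendLetter j) (delStd j) (Bnij n i j) := by
    rintro w ⟨hw, u, rfl⟩
    have hnd : (u ++ [i] ++ [j]).Nodup := by simpa using hw.1.1.1.nodup
    rw [show u ++ [i, j] = u ++ [i] ++ [j] by simp]
    exact appendLetter_delStd fun hjl => (nodup_append.1 hnd).2.2 j hjl j (mem_singleton_self j) rfl
  refine Set.InvOn.bijOn ⟨hleft, fun v _ => delStd_appendLetter j v⟩ (fun w hw => ?_)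
    fun v hv => (appendLetter_mem_Bnij_iff hj hji hin).2 hv
  rw [← appendLetter_mem_Bnij_iff hj hji hin, hleft hw]
  exact hw

theorem bcount_eq_bLast {i j n : ℕ} (hj : 2 ≤ j) (hji : j < i) (hin : i < n) :
    bcount n i j = bLast (n - 1) (i - 1) :=
  (bijOn_delStd_Bnij hj hji hin).ncard_eq

theorem setOf_Bset_append_eq_biUnion_Bnij {m x : ℕ} (hm : 2 ≤ m) :
    {w ∈ Bset m | ∃ u, w = u ++ [x]} = ⋃ k ∈ ((Finset.Icc 1 m).erase x : Set ℕ), Bnij m k x := by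
  ext w
  simp only [Set.mem_iUnion, Bnij, Set.mem_ofPred_eq, exists_prop, Finset.coe_erase,
    Finset.coe_Icc, Set.mem_sdiff, Set.mem_Icc, Set.mem_singleton_iff]
  constructor
  · rintro ⟨hw, u, rfl⟩
    have hperm : IsPermOf m (u ++ [x]) := hw.1.1.1
    obtain ⟨u', k, rfl⟩ : ∃ u' k, u = u' ++ [k] := by
      refine (eq_nil_or_concat' u).resolve_left ?_
      rintro rfl
      have := hperm.length_eq
      simp only [nil_append, length_singleton] at this
      omega
    have hkx : k ≠ x := (nodup_append.1 hperm.nodup).2.2 k (by simp) x (by simp)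
    exact ⟨k, ⟨hperm.mem_iff.1 (by simp), hkx⟩, hw, u', by simp⟩
  · rintro ⟨k, -, hw, u, rfl⟩
    exact ⟨hw, u ++ [k], by simp⟩

theorem pairwiseDisjoint_Bnij (s : Set ℕ) (m x : ℕ) : s.PairwiseDisjoint (Bnij m · x) := by
  intro k _ k' _ hne
  refine Set.disjoint_left.2 ?_
  rintro w ⟨-, u, rfl⟩ ⟨-, u', hu'⟩
  exact hne (by simpa using congrArg (fun w => w.dropLast.getLast?) hu')

theorem finite_Bnij (m k x : ℕ) : (Bnij m k x).Finite :=
  (finite_setOf_isPermOf m).subset fun _ hw => hw.1.1.1.1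

theorem bLast_eq_sum_bcount {m x : ℕ} (hm : 2 ≤ m) :
    bLast m x = ∑ k ∈ (Finset.Icc 1 m).erase x, bcount m k x := by
  rw [bLast, setOf_Bset_append_eq_biUnion_Bnij hm, Set.Finite.ncard_biUnion (Finset.finite_toSet _)
    (fun k _ => finite_Bnij m k x) (pairwiseDisjoint_Bnij _ m x), finsum_mem_coe_finset]
  rfl

theorem stmt4_general (n i j : ℕ) (hj : 2 ≤ j) (hji : j < i) (hi : i ≤ n - 1) :
    Set.BijOn (delStd j) (Bnij n i j) {w ∈ Bset (n - 1) | ∃ u, w = u ++ [i - 1]} ∧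
    bcount n i j = ∑ k ∈ (Finset.Icc 1 (n - 1)).erase (i - 1), bcount (n - 1) k (i - 1) := by
  have hin : i < n := by omega
  refine ⟨bijOn_delStd_Bnij hj hji hin, ?_⟩
  rw [bcount_eq_bLast hj hji hin, bLast_eq_sum_bcount (by omega)]

theorem stmt4 (n i j : ℕ) (hn : 4 ≤ n) (hj : 2 ≤ j) (hji : j < i) (hi : i ≤ n - 1) :
    Set.BijOn (delStd j) (Bnij n i j) {w ∈ Bset (n - 1) | ∃ u, w = u ++ [i - 1]} ∧
    bcount n i j = ∑ k ∈ (Finset.Icc 1 (n - 1)).erase (i - 1), bcount (n - 1) k (i - 1) :=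
  stmt4_general n i j hj hji hi
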